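/- Let δ, δ' ∈ (0, π/2) and let τ : ℝ → ℝ be continuous, 2π-periodic, with τ(t) = 0 for all t ∈ (−δ, δ') and τ(t) ≥ 0 for all t ∈ ℝ. Suppose there exist t₁ ∈ (π/2, π), t₂ ∈ (−π, −π/2) and ε̃ > 0 such that τ(t) ≥ ε̃ for all t ∈ [t₁, π] ∪ [−π, t₂]. Define, for |θ| < min(δ, δ')/2, F(θ) := (1/(2π)) · [ ∫_{−π+θ}^{−δ} τ(t)·cot((θ−t)/2) dt + ∫_{δ'}^{π+θ} τ(t)·cot((θ−t)/2) dt ]. Then the derivative of F at 0 satisfies F'(0) ≤ −(ε̃/(4π)) · ( (π − t₁) + (π + t₂) ) < 0. That is, F'(0) admits a strictly negative upper bound depending only on t₁, t₂ and ε̃ (and not on δ, δ' or on the particular τ). -/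

import Mathlib

/-!
The kernel `τ(t) cot((θ - t)/2)` vanishes at the moving endpoints `t = ∓π + θ`, because
`cot (±π/2) = 0`. Hence by the Leibniz rule only the `θ`-derivative `-τ(t) / (2 sin²((θ - t)/2))`
of the kernel contributes, and `F'(0) = -(1/4π) (∫_{-π}^{-δ} + ∫_{δ'}^{π}) τ(t) / sin²(t/2) dt`.
As `τ ≥ 0` and `sin² ≤ 1`, this integral is at least `ε̃` times the total length of `[t₁, π]` and
`[-π, t₂]`.
-/

open Real MeasureTheory Set Filter Topology Function

theorem exists_pos_forall_prod_mem {X Y : Type*} [PseudoMetricSpace X] [PseudoMetricSpace Y]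
    {U : Set (X × Y)} {K : Set Y} {x₀ : X} (hU : IsOpen U) (hK : IsCompact K)
    (hKU : ∀ y ∈ K, (x₀, y) ∈ U) :
    ∃ ε > 0, ∀ x y z, dist x x₀ < ε → z ∈ K → dist y z < ε → (x, y) ∈ U := by
  obtain ⟨ε, hε, hsub⟩ := (isCompact_singleton.prod hK).exists_thickening_subset_open hU
    (by rintro ⟨x, y⟩ ⟨rfl, hy⟩; exact hKU y hy)
  refine ⟨ε, hε, fun x y z hx hz hy => hsub (Metric.mem_thickening_iff.2 ⟨(x₀, z), ⟨rfl, hz⟩, ?_⟩)⟩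
  rw [Prod.dist_eq]
  exact max_lt hx hy

section ParametricIntegral

variable {E : Type*} [NormedAddCommGroup E] {f f' : ℝ → ℝ → E} {U : Set (ℝ × ℝ)}

theorem ContinuousOn.intervalIntegrable_of_prodMk_mem {x a b : ℝ}
    (hf : ContinuousOn (uncurry f) U) (hU : IsOpen U) (h : ∀ t ∈ uIcc a b, (x, t) ∈ U) :
    IntervalIntegrable (f x) volume a b :=
  ContinuousOn.intervalIntegrable fun t ht =>
    ((hf.continuousAt (hU.mem_nhds (h t ht))).comp
      (Continuous.prodMk_right x).continuousAt).continuousWithinAt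

variable [NormedSpace ℝ E]

theorem hasDerivAt_intervalIntegral_of_continuousOn {a b x₀ : ℝ} (hU : IsOpen U)
    (hab : ∀ t ∈ uIcc a b, (x₀, t) ∈ U) (hf : ContinuousOn (uncurry f) U)
    (hf' : ContinuousOn (uncurry f') U)
    (hderiv : ∀ p ∈ U, HasDerivAt (fun x => f x p.2) (f' p.1 p.2) p.1) :
    HasDerivAt (fun x => ∫ t in a..b, f x t) (∫ t in a..b, f' x₀ t) x₀ := by
  obtain ⟨ε, hε, htube⟩ := exists_pos_forall_prod_mem hU isCompact_uIcc hab
  have hsub : ∀ x ∈ Metric.closedBall x₀ (ε / 2), ∀ t ∈ uIcc a b, (x, t) ∈ U :=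
    fun x hx t ht => htube x t t (by rw [Metric.mem_closedBall] at hx; linarith) ht
      (by simpa using hε)
  obtain ⟨C, hC⟩ :=
    ((isCompact_closedBall x₀ (ε / 2)).prod isCompact_uIcc).exists_bound_of_continuousOn
      (hf'.mono fun p hp => hsub p.1 hp.1 p.2 hp.2)
  refine (intervalIntegral.hasDerivAt_integral_of_dominated_loc_of_deriv_le
    (s := Metric.ball x₀ (ε / 2)) (bound := fun _ => C) (Metric.ball_mem_nhds x₀ (half_pos hε))
    ?_ (hf.intervalIntegrable_of_prodMk_mem hU hab) ?_ ?_ intervalIntegrable_const ?_).2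
  · filter_upwards [Metric.ball_mem_nhds x₀ (half_pos hε)] with x hx
    exact (intervalIntegrable_iff.1 <| hf.intervalIntegrable_of_prodMk_mem hU
      (hsub x (Metric.ball_subset_closedBall hx))).aestronglyMeasurable
  · exact (intervalIntegrable_iff.1 <|
      hf'.intervalIntegrable_of_prodMk_mem hU hab).aestronglyMeasurable
  · exact ae_of_all _ fun t ht x hx =>
      hC (x, t) ⟨Metric.ball_subset_closedBall hx, uIoc_subset_uIcc ht⟩
  · exact ae_of_all _ fun t ht x hx =>
      hderiv (x, t) (hsub x (Metric.ball_subset_closedBall hx) t (uIoc_subset_uIcc ht))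

variable [CompleteSpace E]

theorem hasDerivAt_intervalIntegral_endpoint {e : ℝ} (hU : IsOpen U) (he : ((0 : ℝ), e) ∈ U)
    (hf : ContinuousOn (uncurry f) U) :
    HasDerivAt (fun x => ∫ t in e..e + x, f x t) (f 0 e) 0 := by
  rw [hasDerivAt_iff_isLittleO, Asymptotics.isLittleO_iff]
  intro c hc
  have hnear : ∀ᶠ p in 𝓝 ((0 : ℝ), e), p ∈ U ∧ uncurry f p ∈ Metric.closedBall (f 0 e) c :=
    Filter.Eventually.and (hU.mem_nhds he) <|
      (hf.continuousAt (hU.mem_nhds he)).eventually (Metric.closedBall_mem_nhds (f 0 e) hc)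
  obtain ⟨ρ, hρ, hball⟩ := Metric.mem_nhds_iff.1 hnear
  filter_upwards [Metric.ball_mem_nhds 0 hρ] with x hx
  have hseg : ∀ t ∈ uIcc e (e + x), (x, t) ∈ Metric.ball ((0 : ℝ), e) ρ := by
    intro t ht
    rw [Metric.mem_ball, Prod.dist_eq, Real.dist_eq t]
    refine max_lt hx (lt_of_le_of_lt ?_ (mem_ball_zero_iff.1 hx))
    simpa using abs_sub_left_of_mem_uIcc ht
  have hint := hf.intervalIntegrable_of_prodMk_mem hU fun t ht => (hball (hseg t ht)).1
  calc ‖(∫ t in e..e + x, f x t) - (∫ t in e..e + 0, f 0 t) - (x - 0) • f 0 e‖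
      = ‖∫ t in e..e + x, (f x t - f 0 e)‖ := by
        rw [add_zero, intervalIntegral.integral_same, intervalIntegral.integral_sub hint
          intervalIntegrable_const, intervalIntegral.integral_const]
        simp
    _ ≤ c * |e + x - e| := intervalIntegral.norm_integral_le_of_norm_le_const fun t ht =>
        mem_closedBall_iff_norm.1 (hball (hseg t (uIoc_subset_uIcc ht))).2
    _ = c * ‖x - 0‖ := by simp

theorem hasDerivAt_intervalIntegral_add_endpoint {a b : ℝ} (hU : IsOpen U)
    (hab : ∀ t ∈ uIcc a b, ((0 : ℝ), t) ∈ U) (hf : ContinuousOn (uncurry f) U)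
    (hf' : ContinuousOn (uncurry f') U)
    (hderiv : ∀ p ∈ U, HasDerivAt (fun x => f x p.2) (f' p.1 p.2) p.1) :
    HasDerivAt (fun x => ∫ t in a..b + x, f x t) ((∫ t in a..b, f' 0 t) + f 0 b) 0 := by
  obtain ⟨ε, hε, htube⟩ := exists_pos_forall_prod_mem hU isCompact_uIcc hab
  refine ((hasDerivAt_intervalIntegral_of_continuousOn hU hab hf hf' hderiv).add
    (hasDerivAt_intervalIntegral_endpoint hU (hab b right_mem_uIcc) hf)).congr_of_eventuallyEq ?_
  filter_upwards [Metric.ball_mem_nhds (0 : ℝ) hε] with x hx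
  refine (intervalIntegral.integral_add_adjacent_intervals
    (hf.intervalIntegrable_of_prodMk_mem hU fun t ht => htube x t t hx ht (by simpa using hε))
    (hf.intervalIntegrable_of_prodMk_mem hU fun t ht => htube x t b hx right_mem_uIcc ?_)).symm
  rw [Real.dist_eq]
  exact lt_of_le_of_lt (by simpa using abs_sub_left_of_mem_uIcc ht) (mem_ball_zero_iff.1 hx)

end ParametricIntegral

theorem mul_sub_le_intervalIntegral_of_le_on {g : ℝ → ℝ} {a b c d m : ℝ} (hac : a ≤ c)
    (hcd : c ≤ d) (hdb : d ≤ b) (hg : IntervalIntegrable g volume a b)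
    (h0 : ∀ t ∈ Icc a b, 0 ≤ g t) (hm : ∀ t ∈ Icc c d, m ≤ g t) :
    m * (d - c) ≤ ∫ t in a..b, g t :=
  calc m * (d - c) = ∫ _ in c..d, m := by simp [mul_comm]
    _ ≤ ∫ t in c..d, g t := intervalIntegral.integral_mono_on hcd intervalIntegrable_const
        (hg.mono_set (by
          rw [uIcc_of_le hcd, uIcc_of_le (hac.trans (hcd.trans hdb))]
          exact Icc_subset_Icc hac hdb)) hm
    _ ≤ ∫ t in a..b, g t := intervalIntegral.integral_mono_interval hac hcd hdb
        (ae_restrict_of_forall_mem measurableSet_Ioc fun t ht => h0 t (Ioc_subset_Icc_self ht)) hg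

theorem sin_half_ne_zero_of_abs_le {t : ℝ} (h0 : t ≠ 0) (hπ : |t| ≤ π) : sin (t / 2) ≠ 0 := by
  rw [abs_le] at hπ
  rw [Ne, sin_eq_zero_iff_of_lt_of_lt (by linarith [pi_pos]) (by linarith [pi_pos])]
  exact div_ne_zero h0 two_ne_zero

section CotKernel

variable {τ : ℝ → ℝ}

theorem hasDerivAt_cot_kernel {x t : ℝ} (h : sin ((x - t) / 2) ≠ 0) :
    HasDerivAt (fun x => τ t * (cos ((x - t) / 2) / sin ((x - t) / 2)))
      (-(τ t / (2 * sin ((x - t) / 2) ^ 2))) x := by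
  have hlin : HasDerivAt (fun x : ℝ => (x - t) / 2) (1 / 2) x := by
    simpa using ((hasDerivAt_id x).sub_const t).div_const 2
  have hcot := ((hasDerivAt_cos _).comp x hlin).div ((hasDerivAt_sin _).comp x hlin) h
  refine (hcot.const_mul (τ t)).congr_deriv ?_
  simp only [comp_apply]
  field_simp
  linear_combination (-τ t) * sin_sq_add_cos_sq ((x - t) / 2)

theorem continuousOn_cot_kernel (hτ : Continuous τ) :
    ContinuousOn (uncurry fun x t => τ t * (cos ((x - t) / 2) / sin ((x - t) / 2)))
      {p | sin ((p.1 - p.2) / 2) ≠ 0} := fun _ hp =>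
  ContinuousAt.continuousWithinAt (by fun_prop (disch := exact hp))

theorem continuousOn_cot_kernel_deriv (hτ : Continuous τ) :
    ContinuousOn (uncurry fun x t => -(τ t / (2 * sin ((x - t) / 2) ^ 2)))
      {p | sin ((p.1 - p.2) / 2) ≠ 0} := fun _ hp =>
  ContinuousAt.continuousWithinAt (by fun_prop (disch := simp [hp.out]))

theorem hasDerivAt_integral_cot_kernel (hτ : Continuous τ) {a b : ℝ}
    (hab : ∀ t ∈ uIcc a b, sin (t / 2) ≠ 0) (hb : cos (b / 2) = 0) :
    HasDerivAt (fun x => ∫ t in a..b + x, τ t * (cos ((x - t) / 2) / sin ((x - t) / 2)))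
      (-(1 / 2) * ∫ t in a..b, τ t / sin (t / 2) ^ 2) 0 := by
  have hU : IsOpen {p : ℝ × ℝ | sin ((p.1 - p.2) / 2) ≠ 0} :=
    isOpen_ne_fun (by fun_prop) continuous_const
  have hab' : ∀ t ∈ uIcc a b, ((0 : ℝ), t) ∈ {p : ℝ × ℝ | sin ((p.1 - p.2) / 2) ≠ 0} := by
    intro t ht
    simpa [zero_sub, neg_div, sin_neg] using hab t ht
  refine (hasDerivAt_intervalIntegral_add_endpoint hU hab' (continuousOn_cot_kernel hτ)
    (continuousOn_cot_kernel_deriv hτ) fun p hp => hasDerivAt_cot_kernel hp).congr_deriv ?_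
  rw [zero_sub, neg_div, cos_neg, hb, zero_div, mul_zero, add_zero,
    ← intervalIntegral.integral_const_mul]
  congr 1 with t
  rw [zero_sub, neg_div, sin_neg, neg_sq]
  ring

theorem hasDerivAt_two_sided_cot_integral (hτ : Continuous τ) {δ δ' : ℝ}
    (hl : ∀ t ∈ uIcc (-π) (-δ), sin (t / 2) ≠ 0) (hr : ∀ t ∈ uIcc δ' π, sin (t / 2) ≠ 0) :
    HasDerivAt (fun θ => (1 / (2 * π)) *
      ((∫ t in (-π + θ)..(-δ), τ t * (cos ((θ - t) / 2) / sin ((θ - t) / 2))) +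
        ∫ t in δ'..(π + θ), τ t * (cos ((θ - t) / 2) / sin ((θ - t) / 2))))
      (-(1 / (4 * π)) *
        ((∫ t in (-π)..(-δ), τ t / sin (t / 2) ^ 2) + ∫ t in δ'..π, τ t / sin (t / 2) ^ 2)) 0 := by
  have hL := hasDerivAt_integral_cot_kernel hτ (a := -δ) (b := -π) (by rwa [uIcc_comm])
    (by rw [neg_div, cos_neg, cos_pi_div_two])
  have hR := hasDerivAt_integral_cot_kernel hτ hr cos_pi_div_two
  refine (((hL.neg.add hR).const_mul (1 / (2 * π))).congr_of_eventuallyEq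
    (.of_forall fun θ => ?_)).congr_deriv ?_
  · rw [intervalIntegral.integral_symm (-δ)]
    rfl
  · rw [intervalIntegral.integral_symm (-π) (-δ)]
    ring

theorem intervalIntegrable_div_sin_sq (hτ : Continuous τ) {a b : ℝ}
    (hsin : ∀ t ∈ uIcc a b, sin (t / 2) ≠ 0) :
    IntervalIntegrable (fun t => τ t / sin (t / 2) ^ 2) volume a b :=
  ContinuousOn.intervalIntegrable <|
    hτ.continuousOn.div (by fun_prop) fun t ht => pow_ne_zero 2 (hsin t ht)

theorem mul_sub_le_integral_div_sin_sq (hτ : Continuous τ) (hτnn : ∀ t, 0 ≤ τ t)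
    {a b c d m : ℝ} (hsin : ∀ t ∈ uIcc a b, sin (t / 2) ≠ 0) (hac : a ≤ c) (hcd : c ≤ d)
    (hdb : d ≤ b) (hm : ∀ t ∈ Icc c d, m ≤ τ t) :
    m * (d - c) ≤ ∫ t in a..b, τ t / sin (t / 2) ^ 2 := by
  refine mul_sub_le_intervalIntegral_of_le_on hac hcd hdb (intervalIntegrable_div_sin_sq hτ hsin)
    (fun t _ => div_nonneg (hτnn t) (sq_nonneg _)) fun t ht => ?_
  have : sin (t / 2) ≠ 0 :=
    hsin t (by rw [uIcc_of_le (hac.trans (hcd.trans hdb))]; exact Icc_subset_Icc hac hdb ht)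
  exact (hm t ht).trans (le_div_self (hτnn t) (by positivity) (sin_sq_le_one _))

end CotKernel

theorem statement9_general (δ δ' : ℝ) (hδ : δ ∈ Set.Ioo 0 (π / 2)) (hδ' : δ' ∈ Set.Ioo 0 (π / 2))
    (τ : ℝ → ℝ) (hτc : Continuous τ)
    (hτnn : ∀ t, 0 ≤ τ t)
    (t₁ t₂ : ℝ) (ht₁ : t₁ ∈ Set.Ioo (π / 2) π) (ht₂ : t₂ ∈ Set.Ioo (-π) (-π / 2))
    (epsTilde : ℝ) (heps : 0 < epsTilde)
    (hlow : ∀ t, t ∈ Set.Icc t₁ π ∪ Set.Icc (-π) t₂ → epsTilde ≤ τ t)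
    (F : ℝ → ℝ)
    (hF : ∀ θ : ℝ, F θ = (1 / (2 * π)) *
      ((∫ t in (-π + θ)..(-δ), τ t * (Real.cos ((θ - t) / 2) / Real.sin ((θ - t) / 2))) +
        ∫ t in δ'..(π + θ), τ t * (Real.cos ((θ - t) / 2) / Real.sin ((θ - t) / 2)))) :
    deriv F 0 ≤ -(epsTilde / (4 * π)) * ((π - t₁) + (π + t₂)) ∧
    -(epsTilde / (4 * π)) * ((π - t₁) + (π + t₂)) < 0 := by
  obtain ⟨hδ0, hδπ⟩ := hδ
  obtain ⟨hδ'0, hδ'π⟩ := hδ'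
  obtain ⟨ht₁l, ht₁u⟩ := ht₁
  obtain ⟨ht₂l, ht₂u⟩ := ht₂
  have hπ := pi_pos
  have hl : ∀ t ∈ uIcc (-π) (-δ), sin (t / 2) ≠ 0 := fun t ht => by
    rw [uIcc_of_le (by linarith)] at ht
    exact sin_half_ne_zero_of_abs_le (by linarith [ht.2]) (abs_le.2 ⟨ht.1, by linarith [ht.2]⟩)
  have hr : ∀ t ∈ uIcc δ' π, sin (t / 2) ≠ 0 := fun t ht => by
    rw [uIcc_of_le (by linarith)] at ht
    exact sin_half_ne_zero_of_abs_le (by linarith [ht.1]) (abs_le.2 ⟨by linarith [ht.1], ht.2⟩)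
  have hR := mul_sub_le_integral_div_sin_sq hτc hτnn hr (by linarith) ht₁u.le le_rfl
    fun t ht => hlow t (.inl ht)
  have hL := mul_sub_le_integral_div_sin_sq hτc hτnn hl le_rfl ht₂l.le (by linarith)
    fun t ht => hlow t (.inr ht)
  refine ⟨?_, mul_neg_of_neg_of_pos (neg_neg_of_pos (by positivity)) (by linarith)⟩
  rw [((hasDerivAt_two_sided_cot_integral hτc hl hr).congr_of_eventuallyEq (.of_forall hF)).deriv]
  calc _ ≤ -(1 / (4 * π)) * (epsTilde * (t₂ - -π) + epsTilde * (π - t₁)) :=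
        mul_le_mul_of_nonpos_left (by linarith) (by simp [hπ.le])
    _ = _ := by ring

/-- Uniform negative bound on the derivative at `0` of
`F(θ) = (1/2π)·(∫_{-π+θ}^{-δ} τ(t)·cot((θ-t)/2) dt + ∫_{δ'}^{π+θ} τ(t)·cot((θ-t)/2) dt)`
when `τ ≥ 0` vanishes on `(-δ, δ')` and `τ ≥ ε̃` on `[t₁, π] ∪ [-π, t₂]`:
`F'(0) ≤ -(ε̃/4π)·((π - t₁) + (π + t₂)) < 0`. -/
theorem statement9 (δ δ' : ℝ) (hδ : δ ∈ Set.Ioo 0 (π / 2)) (hδ' : δ' ∈ Set.Ioo 0 (π / 2))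
    (τ : ℝ → ℝ) (hτc : Continuous τ) (hτp : ∀ t, τ (t + 2 * π) = τ t)
    (hτ0 : ∀ t ∈ Set.Ioo (-δ) δ', τ t = 0)
    (hτnn : ∀ t, 0 ≤ τ t)
    (t₁ t₂ : ℝ) (ht₁ : t₁ ∈ Set.Ioo (π / 2) π) (ht₂ : t₂ ∈ Set.Ioo (-π) (-π / 2))
    (epsTilde : ℝ) (heps : 0 < epsTilde)
    (hlow : ∀ t, t ∈ Set.Icc t₁ π ∪ Set.Icc (-π) t₂ → epsTilde ≤ τ t)
    (F : ℝ → ℝ)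
    (hF : ∀ θ : ℝ, F θ = (1 / (2 * π)) *
      ((∫ t in (-π + θ)..(-δ), τ t * (Real.cos ((θ - t) / 2) / Real.sin ((θ - t) / 2))) +
        ∫ t in δ'..(π + θ), τ t * (Real.cos ((θ - t) / 2) / Real.sin ((θ - t) / 2)))) :
    deriv F 0 ≤ -(epsTilde / (4 * π)) * ((π - t₁) + (π + t₂)) ∧
    -(epsTilde / (4 * π)) * ((π - t₁) + (π + t₂)) < 0 :=
  statement9_general δ δ' hδ hδ' τ hτc hτnn t₁ t₂ ht₁ ht₂ epsTilde heps hlow F hF
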